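/- arXiv:1906.06733 — 2 statements merged into one kernel-verified Lean document; each statement's English description precedes it below -/
import Mathlib

section
/- Let τ be a finite group and M a finite-dimensional kτ-module. Then the p-th iterate of Θ_{τ,M} is zero: (Θ_{τ,M})^p = 0 as an endomorphism of A_τ ⊗_k M. -/
/-!
`Θ_{τ,M}` is the sum over `g` of the `A_τ`-linear maps `(g - e)^∨ ⊗ (ρ g - 1)`, and these summands
commute pairwise: if `g` and `h` commute then so do `ρ g` and `ρ h`, and otherwise no elementary
abelian subgroup contains both, so `(g - e)^∨ (h - e)^∨ = 0` in `A_τ`. Since `p = 0` in the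
endomorphism ring, the freshman's dream gives `Θ^p = ∑ ((g - e)^∨)^p ⊗ (ρ g - 1)^p`, and each
`(ρ g - 1)^p = ρ (g^p) - 1` vanishes.
-/

open MvPolynomial TensorProduct

set_option synthInstance.maxHeartbeats 1000000
set_option maxHeartbeats 1600000
set_option linter.unusedSectionVars false

attribute [local instance] Classical.propDecidable

noncomputable section

/-- A subgroup `E` of `τ` is an *elementary abelian `p`-subgroup* if it is commutative and
every element has order dividing `p`. -/
def IsElemAb {τ : Type} [Group τ] (p : ℕ) (E : Subgroup τ) : Prop :=
  (∀ g ∈ E, g ^ p = 1) ∧ ∀ g ∈ E, ∀ h ∈ E, g * h = h * g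

/-- The poset `𝓔(τ)` of elementary abelian `p`-subgroups of `τ`, ordered by inclusion. -/
abbrev ElemAb (τ : Type) [Group τ] (p : ℕ) := {E : Subgroup τ // IsElemAb p E}

variable (k : Type) [Field k] (τ : Type) [Group τ] [Fintype τ] (p : ℕ)

/-- The index set `{g ∈ E : g ≠ 1}` of the canonical basis `{g - e}` of `J_E`. -/
def Idx (E : ElemAb τ p) : Type := {g : τ // g ∈ E.1 ∧ g ≠ 1}

/-- The model for the symmetric algebra `S^•(J_E^*)`: the polynomial algebra on the basis
`{(g-e)^∨ : e ≠ g ∈ E}` of `J_E^*` dual to the canonical basis `{g - e}` of `J_E`. -/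
abbrev SJ (E : ElemAb τ p) := MvPolynomial (Idx τ p E) k

/-- The restriction map `S^•(J_E^*) → S^•(J_{E'}^*)` induced by the surjection
`J_E^* → J_{E'}^*` dual to the inclusion `J_{E'} ⊆ J_E`. -/
def res {E' E : ElemAb τ p} (_ : E' ≤ E) : SJ k τ p E →ₐ[k] SJ k τ p E' :=
  aeval fun g => if hg : g.1 ∈ E'.1 then X ⟨g.1, hg, g.2.2⟩ else 0

/-- `A_τ`: the subalgebra of `∏_{E ∈ 𝓔(τ)} S^•(J_E^*)` of families compatible with all
restriction maps. -/
def Atau : Subalgebra k (∀ E : ElemAb τ p, SJ k τ p E) where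
  carrier := {f | ∀ (E' E : ElemAb τ p) (h : E' ≤ E), res k τ p h (f E) = f E'}
  mul_mem' := fun ha hb E' E h => by
    simp only [Pi.mul_apply, map_mul]; rw [ha E' E h, hb E' E h]
  add_mem' := fun ha hb E' E h => by
    simp only [Pi.add_apply, map_add]; rw [ha E' E h, hb E' E h]
  algebraMap_mem' := fun r E' E h => by
    simp only [Pi.algebraMap_apply]; exact (res k τ p h).commutes r

/-- The family `(g - e)^∨ ∈ ∏_E S^•(J_E^*)`: its `E`-component is the dual basis
functional `(g-e)^∨` if `g ∈ E`, `g ≠ e`, and `0` otherwise. -/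
def dualElt (g : τ) : ∀ E : ElemAb τ p, SJ k τ p E :=
  fun E => if h : g ∈ E.1 ∧ g ≠ 1 then X ⟨g, h⟩ else 0

lemma dualElt_mem (g : τ) : dualElt k τ p g ∈ Atau k τ p := by
  intro E' E h
  by_cases hgE : g ∈ E.1 ∧ g ≠ 1
  · by_cases hgE' : g ∈ E'.1
    · have h' : g ∈ E'.1 ∧ g ≠ 1 := ⟨hgE', hgE.2⟩
      simp only [dualElt, dif_pos hgE, dif_pos h']
      exact (aeval_X _ _).trans (dif_pos hgE')
    · have : ¬ (g ∈ E'.1 ∧ g ≠ 1) := fun hc => hgE' hc.1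
      simp only [dualElt, dif_pos hgE, dif_neg this]
      exact (aeval_X _ _).trans (dif_neg hgE')
  · have hgE' : ¬ (g ∈ E'.1 ∧ g ≠ 1) := by
      intro hc; exact hgE ⟨h hc.1, hc.2⟩
    simp [dualElt, hgE, hgE']

/-- The coordinate ring `A_τ` as a type. -/
abbrev Rt := ↥(Atau k τ p)

/-- The conjugate `x⁻¹ E x` of an elementary abelian `p`-subgroup (realized as the
preimage of `E` under conjugation by `x`). -/
def conjE (x : τ) (E : ElemAb τ p) : ElemAb τ p :=
  ⟨E.1.comap (MulAut.conj x).toMonoidHom, by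
    obtain ⟨h1, h2⟩ := E.2
    constructor
    · intro g hg
      rw [Subgroup.mem_comap] at hg
      have := h1 _ hg
      simp only [MulEquiv.coe_toMonoidHom, MulAut.conj_apply] at this
      rw [conj_pow] at this
      have : g ^ p = x⁻¹ * (x * g ^ p * x⁻¹) * x := by group
      rw [‹x * _ * x⁻¹ = 1›] at this
      simpa using this
    · intro g hg h hh
      rw [Subgroup.mem_comap] at hg hh
      have := h2 _ hg _ hh
      simp only [MulEquiv.coe_toMonoidHom, MulAut.conj_apply] at this
      have h3 : x * (g * h) * x⁻¹ = x * (h * g) * x⁻¹ := by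
        calc x * (g * h) * x⁻¹ = (x * g * x⁻¹) * (x * h * x⁻¹) := by group
        _ = (x * h * x⁻¹) * (x * g * x⁻¹) := this
        _ = x * (h * g) * x⁻¹ := by group
      have := congrArg (fun z => x⁻¹ * z * x) h3
      simpa [mul_assoc] using this⟩

/-- Reindexing of variables along conjugation: `h ↦ x h x⁻¹`.  This realizes the dual of
the `k`-linear isomorphism `J_E → J_{x⁻¹Ex}`, `g - e ↦ x⁻¹gx - e`, on dual bases. -/
def conjIdx (x : τ) (E : ElemAb τ p) (h : Idx τ p (conjE τ p x E)) : Idx τ p E :=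
  ⟨x * h.1 * x⁻¹, by
    have := Subgroup.mem_comap.mp h.2.1
    simpa using this, by
    intro hc
    apply h.2.2
    have : h.1 = x⁻¹ * (x * h.1 * x⁻¹) * x := by group
    rw [hc] at this; simpa using this⟩

/-- The action of `x ∈ τ` on families: the `E`-component of `x · f` is the image of
`f_{x⁻¹Ex}` under the `k`-algebra isomorphism `S^•(J_{x⁻¹Ex}^*) → S^•(J_E^*)` dual to
the `k`-linear isomorphism `J_E → J_{x⁻¹Ex}`, `g - e ↦ x⁻¹gx - e`. -/
def actFun (x : τ) (f : ∀ E : ElemAb τ p, SJ k τ p E) : ∀ E : ElemAb τ p, SJ k τ p E :=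
  fun E => rename (conjIdx τ p x E) (f (conjE τ p x E))

lemma actFun_mem (x : τ) (f : ∀ E : ElemAb τ p, SJ k τ p E) (hf : f ∈ Atau k τ p) :
    actFun k τ p x f ∈ Atau k τ p := by
  intro E' E h
  have hle : conjE τ p x E' ≤ conjE τ p x E := by
    intro g hg
    exact Subgroup.mem_comap.mpr (h (Subgroup.mem_comap.mp hg))
  have key : (res k τ p h).comp (rename (conjIdx τ p x E) :
        SJ k τ p (conjE τ p x E) →ₐ[k] SJ k τ p E)
      = (rename (conjIdx τ p x E') :
          SJ k τ p (conjE τ p x E') →ₐ[k] SJ k τ p E').comp (res k τ p hle) := by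
    apply MvPolynomial.algHom_ext
    intro u
    by_cases hc : x * u.1 * x⁻¹ ∈ E'.1
    · have hc' : u.1 ∈ (conjE τ p x E').1 := Subgroup.mem_comap.mpr (by simpa using hc)
      have h2 : (conjIdx τ p x E u).1 ∈ E'.1 := hc
      simp only [AlgHom.coe_comp, Function.comp_apply, rename_X, res, aeval_X]
      rw [dif_pos h2, dif_pos hc']
      first
        | exact (rename_X _ _).symm
        | exact rename_X _ _
        | (erw [rename_X]; rfl)
    · have hc' : ¬ u.1 ∈ (conjE τ p x E').1 :=
        fun hm => hc (by simpa using Subgroup.mem_comap.mp hm)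
      have h2 : ¬ (conjIdx τ p x E u).1 ∈ E'.1 := hc
      simp only [AlgHom.coe_comp, Function.comp_apply, rename_X, res, aeval_X]
      rw [dif_neg h2, dif_neg hc']
      simp
  have := AlgHom.congr_fun key (f (conjE τ p x E))
  simpa [actFun, hf _ _ hle] using this

/-- The action of `x ∈ τ` on `A_τ` as a `k`-algebra homomorphism. -/
def actAlg (x : τ) : Rt k τ p →ₐ[k] Rt k τ p where
  toFun f := ⟨actFun k τ p x f.1, actFun_mem k τ p x f.1 f.2⟩
  map_one' := by
    apply Subtype.ext; funext E
    simp [actFun]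
  map_mul' a b := by
    apply Subtype.ext; funext E
    simp [actFun, map_mul]
  map_zero' := by
    apply Subtype.ext; funext E
    simp [actFun]
  map_add' a b := by
    apply Subtype.ext; funext E
    simp [actFun, map_add]
  commutes' r := by
    apply Subtype.ext; funext E
    simp [actFun, Algebra.algebraMap_eq_smul_one, Pi.smul_apply]

variable {M : Type} [AddCommGroup M] [Module k M]

/-- The universal operator `Θ_{τ,M}`: the `A_τ`-linear endomorphism of `A_τ ⊗_k M`
determined by `Θ_{τ,M}(1 ⊗ m) = ∑_{g ∈ τ, g^p = e, g ≠ e} (g-e)^∨ ⊗ (g·m - m)`. -/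
def theta (ρ : Representation k τ M) :
    (Rt k τ p ⊗[k] M) →ₗ[Rt k τ p] (Rt k τ p ⊗[k] M) :=
  ∑ g ∈ Finset.univ.filter (fun g : τ => g ^ p = 1 ∧ g ≠ 1),
    (⟨dualElt k τ p g, dualElt_mem k τ p g⟩ : Rt k τ p) •
      LinearMap.baseChange (Rt k τ p) (ρ g - LinearMap.id)

/-- The diagonal action of `x ∈ τ` on `A_τ ⊗_k M`. -/
def diag (ρ : Representation k τ M) (x : τ) :
    (Rt k τ p ⊗[k] M) →ₗ[k] (Rt k τ p ⊗[k] M) :=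
  TensorProduct.map (actAlg k τ p x).toLinearMap (ρ x)


section FreshmanDream

variable {R : Type*} {p : ℕ}

theorem natCast_eq_zero_of_module (k : Type*) [Semiring k] [CharP k p] [Semiring R] [Module k R] :
    (p : R) = 0 := by
  rw [← Nat.smul_one_eq_cast, ← Nat.cast_smul_eq_nsmul k, CharP.cast_eq_zero, zero_smul]

theorem Commute.add_pow_prime_of_natCast_eq_zero [Semiring R] {x y : R} (hp : p.Prime)
    (hpR : (p : R) = 0) (h : Commute x y) : (x + y) ^ p = x ^ p + y ^ p := by
  obtain ⟨r, hr⟩ := h.exists_add_pow_prime_eq hp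
  rw [hr, hpR, zero_mul, zero_mul, zero_mul, add_zero]

theorem Finset.sum_pow_prime_of_natCast_eq_zero [Semiring R] {ι : Type*} (hp : p.Prime)
    (hpR : (p : R) = 0) {s : Finset ι} {f : ι → R}
    (h : (s : Set ι).Pairwise fun i j => Commute (f i) (f j)) :
    (∑ i ∈ s, f i) ^ p = ∑ i ∈ s, f i ^ p := by
  induction s using Finset.cons_induction with
  | empty => simp [hp.ne_zero]
  | cons a s ha ih =>
    rw [Finset.coe_cons, Set.pairwise_insert] at h
    have ha_comm : Commute (f a) (∑ i ∈ s, f i) :=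
      Commute.sum_right _ _ _ fun i hi => (h.2 i hi fun hia => ha (hia ▸ hi)).1
    rw [Finset.sum_cons, Finset.sum_cons, ha_comm.add_pow_prime_of_natCast_eq_zero hp hpR, ih h.1]

theorem sub_one_pow_prime_of_natCast_eq_zero [Ring R] (x : R) (hp : p.Prime) (hpR : (p : R) = 0) :
    (x - 1) ^ p = x ^ p - 1 := by
  have h := (Commute.one_right (x - 1)).add_pow_prime_of_natCast_eq_zero hp hpR
  rw [sub_add_cancel, one_pow] at h
  rw [h, add_sub_cancel_right]

end FreshmanDream

def dualEltRt (g : τ) : Rt k τ p := ⟨dualElt k τ p g, dualElt_mem k τ p g⟩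

theorem dualEltRt_mul_dualEltRt_of_not_commute {g h : τ} (hgh : ¬ Commute g h) :
    dualEltRt k τ p g * dualEltRt k τ p h = 0 := by
  refine Subtype.ext <| funext fun E => ?_
  by_cases hgE : g ∈ E.1 ∧ g ≠ 1
  · by_cases hhE : h ∈ E.1 ∧ h ≠ 1
    · exact absurd (E.2.2 g hgE.1 h hhE.1) hgh
    · simp only [dualEltRt, Subalgebra.coe_mul, Pi.mul_apply, dualElt, dif_neg hhE, mul_zero,
        ZeroMemClass.coe_zero, Pi.zero_apply]
  · simp only [dualEltRt, Subalgebra.coe_mul, Pi.mul_apply, dualElt, dif_neg hgE, zero_mul,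
      ZeroMemClass.coe_zero, Pi.zero_apply]

def thetaSummand (ρ : Representation k τ M) (g : τ) :
    Module.End (Rt k τ p) (Rt k τ p ⊗[k] M) :=
  dualEltRt k τ p g • LinearMap.baseChange (Rt k τ p) (ρ g - LinearMap.id)

theorem theta_eq_sum_thetaSummand (ρ : Representation k τ M) :
    theta k τ p ρ = ∑ g ∈ Finset.univ.filter (fun g : τ => g ^ p = 1 ∧ g ≠ 1),
      thetaSummand k τ p ρ g := rfl

theorem commute_thetaSummand (ρ : Representation k τ M) (g h : τ) :
    Commute (thetaSummand k τ p ρ g) (thetaSummand k τ p ρ h) := by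
  unfold Commute SemiconjBy thetaSummand
  rw [smul_mul_smul_comm, smul_mul_smul_comm, mul_comm (dualEltRt k τ p h)]
  by_cases hgh : Commute g h
  · have hρ : Commute (ρ g - 1) (ρ h - 1) :=
      ((hgh.map ρ).sub_right (.one_right _)).sub_left ((Commute.one_left _).sub_right (.one_right _))
    rw [← LinearMap.baseChange_mul, ← LinearMap.baseChange_mul, ← Module.End.one_eq_id, hρ.eq]
  · rw [dualEltRt_mul_dualEltRt_of_not_commute k τ p hgh, zero_smul, zero_smul]

theorem thetaSummand_pow_prime [Fact p.Prime] [CharP k p] (ρ : Representation k τ M) {g : τ}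
    (hg : g ^ p = 1) : thetaSummand k τ p ρ g ^ p = 0 := by
  have hρ : (ρ g - 1) ^ p = 0 := by
    rw [sub_one_pow_prime_of_natCast_eq_zero _ Fact.out (natCast_eq_zero_of_module k), ← map_pow,
      hg, map_one, sub_self]
  rw [thetaSummand, smul_pow, ← LinearMap.baseChange_pow, ← Module.End.one_eq_id, hρ,
    LinearMap.baseChange_zero, smul_zero]

theorem geometric_invariants_stmt7_general {p : ℕ} [Fact p.Prime]
    (k : Type) [Field k] [CharP k p]
    (τ : Type) [Group τ] [Fintype τ]
    (M : Type) [AddCommGroup M] [Module k M]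
    (ρ : Representation k τ M) :
    theta k τ p ρ ^ p = 0 := by
  rw [theta_eq_sum_thetaSummand, Finset.sum_pow_prime_of_natCast_eq_zero Fact.out
    (natCast_eq_zero_of_module k) fun g _ h _ _ => commute_thetaSummand k τ p ρ g h]
  exact Finset.sum_eq_zero fun g hg => thetaSummand_pow_prime k τ p ρ (Finset.mem_filter.1 hg).2.1

/-- for a finite dimensional `kτ`-module `M`, the `p`-th iterate of the
universal operator `Θ_{τ,M}` on `A_τ ⊗_k M` is zero. -/
theorem geometric_invariants_stmt7 {p : ℕ} [Fact p.Prime]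
    (k : Type) [Field k] [CharP k p]
    (τ : Type) [Group τ] [Fintype τ]
    (M : Type) [AddCommGroup M] [Module k M] [FiniteDimensional k M]
    (ρ : Representation k τ M) :
    theta k τ p ρ ^ p = 0 :=
  geometric_invariants_stmt7_general k τ M ρ
end
end

section
/- Let E be an elementary abelian p-group of rank r with basis g_1, …, g_r, let π : S•(J_E*) → S•((J_E/J_E²)*) be the k-algebra homomorphism induced by the dual s_E* : J_E* → (J_E/J_E²)* of the section s_E (determined by sending the class of g_i − e to g_i − e), and let σ : kE → k[x_1, …, x_r]/(x_1^p, …, x_r^p) be the k-algebra isomorphism with σ(g_i) = 1 + x_i. Writing Y_i ∈ (J_E/J_E²)* for the functional dual to the class of g_i − e, the image of Θ_E := Σ_{g ∈ E, g ≠ e} (g − e)^∨ ⊗ (g − e) under π ⊗ σ : S•(J_E*) ⊗_k kE → S•((J_E/J_E²)*) ⊗_k k[x_1, …, x_r]/(x_1^p, …, x_r^p) equals Σ_{i=1}^r Y_i ⊗ x_i. -/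
/-!
Statement 15.  Let `E` be an elementary abelian `p`-group of rank `r` with basis
`g 1, …, g r`.  Let `π : S^•(J_E^*) → S^•((J_E/J_E²)^*)` be the algebra map induced by
the dual `s_E^*` of the section `s_E` (class of `g i - e` ↦ `g i - e`): on the dual
basis variables it sends `(h-e)^∨` to `Y i` if `h = g i` and to `0` otherwise
(Statement 14).  Let `σ : kE → k[x₁,…,x_r]/(x_i^p)` be the `k`-algebra isomorphism with
`σ(g i) = 1 + x i`.  Then `(π ⊗ σ)(Θ_E) = ∑ i, Y i ⊗ x i`.

Here `S^•(J_E^*)` is modelled as `k[X_h : e ≠ h ∈ E]` (on the dual basis of the basis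
`{h - e}` of `J_E`), `S^•((J_E/J_E²)^*)` as `k[Y_1,…,Y_r]` (on the dual basis of the
basis of classes of the `g i - e`), and `Θ_E = ∑_{e ≠ h ∈ E} (h-e)^∨ ⊗ (h-e)`.
-/

open MvPolynomial TensorProduct MonoidAlgebra

attribute [local instance] Classical.propDecidable

set_option linter.unusedSectionVars false
set_option synthInstance.maxHeartbeats 400000
set_option maxHeartbeats 800000

noncomputable section

variable (k : Type) [Field k] (E : Type) [CommGroup E] [Fintype E]

/-- The universal operator `Θ_E = ∑_{e ≠ h ∈ E} (h-e)^∨ ⊗ (h-e)` in `S^•(J_E^*) ⊗ kE`. -/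
def thetaE : MvPolynomial {x : E // x ≠ 1} k ⊗[k] MonoidAlgebra k E :=
  ∑ h : {x : E // x ≠ 1},
    (X h : MvPolynomial {x : E // x ≠ 1} k) ⊗ₜ[k] (MonoidAlgebra.of k E h.1 - 1)

/-- The truncated polynomial algebra `k[x₁,…,x_r]/(x_i^p)`. -/
abbrev TruncPoly (p r : ℕ) := MvPolynomial (Fin r) k ⧸
  Ideal.span (Set.range fun i : Fin r => (X i : MvPolynomial (Fin r) k) ^ p)

/-- The map `π : S^•(J_E^*) → S^•((J_E/J_E²)^*)` induced by the dual of the section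
`s_E` determined by the basis `g`: `(h-e)^∨ ↦ Y i` if `h = g i`, else `0`. -/
def piMap (r : ℕ) (g : Fin r → E) :
    MvPolynomial {x : E // x ≠ 1} k →ₐ[k] MvPolynomial (Fin r) k :=
  aeval fun h => ∑ i : Fin r, if g i = h.1 then (X i : MvPolynomial (Fin r) k) else 0

/-!
Only the dual basis variables of the `g i - e` survive `π`, so the image of `Θ_E` is
`∑ i, Y i ⊗ σ(g i - e)`; the restriction `h ≠ e` in `Θ_E` is harmless because
`σ(h - e)` vanishes at `h = e`.
-/

theorem Fintype.sum_subtype_ne_ite_eq {α M : Type*} [Fintype α] [DecidableEq α]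
    [AddCommMonoid M] {b : α} (a : α) {f : α → M} (hf : f b = 0) :
    ∑ x : {x : α // x ≠ b}, (if a = x.1 then f x.1 else 0) = f a := by
  have hfull := Fintype.sum_eq_add_sum_subtype_ne (fun x => if a = x then f x else 0) b
  have hb : (if a = b then f b else 0) = 0 := by split_ifs <;> [exact hf; rfl]
  rw [Fintype.sum_ite_eq, hb, zero_add] at hfull
  exact hfull.symm

section

variable {k E}

theorem piMap_X (r : ℕ) (g : Fin r → E) (h : {x : E // x ≠ 1}) :
    piMap k E r g (X h) = ∑ i, if g i = h.1 then (X i : MvPolynomial (Fin r) k) else 0 :=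
  aeval_X _ h

theorem map_thetaE {A B : Type} [CommRing A] [Algebra k A] [CommRing B] [Algebra k B]
    (φ : MvPolynomial {x : E // x ≠ 1} k →ₐ[k] A) (ψ : MonoidAlgebra k E →ₐ[k] B) :
    Algebra.TensorProduct.map φ ψ (thetaE k E)
      = ∑ h : {x : E // x ≠ 1}, φ (X h) ⊗ₜ[k] (ψ (of k E h.1) - 1) := by
  simp only [thetaE, map_sum, Algebra.TensorProduct.map_tmul, map_sub, map_one]

theorem map_piMap_thetaE {B : Type} [CommRing B] [Algebra k B] (r : ℕ) (g : Fin r → E)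
    (ψ : MonoidAlgebra k E →ₐ[k] B) :
    Algebra.TensorProduct.map (piMap k E r g) ψ (thetaE k E)
      = ∑ i, (X i : MvPolynomial (Fin r) k) ⊗ₜ[k] (ψ (of k E (g i)) - 1) := by
  simp only [map_thetaE, piMap_X, sum_tmul, ite_tmul]
  rw [Finset.sum_comm]
  refine Finset.sum_congr rfl fun i _ => ?_
  exact Fintype.sum_subtype_ne_ite_eq (f := fun h => X i ⊗ₜ[k] (ψ (of k E h) - 1)) (g i)
    (by simp only [map_one, sub_self, tmul_zero])

end

theorem geometric_invariants_stmt15_general {p : ℕ}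
    (k : Type) [Field k]
    (E : Type) [CommGroup E] [Fintype E]
    (r : ℕ) (g : Fin r → E)
    -- `σ : kE ≅ k[x₁,…,x_r]/(x_i^p)`, the `k`-algebra isomorphism with `σ(g i) = 1 + x i`
    (σA : MonoidAlgebra k E →ₐ[k] TruncPoly k p r)
    (hσ : ∀ i : Fin r, σA (MonoidAlgebra.of k E (g i))
      = 1 + Ideal.Quotient.mk _ (X i : MvPolynomial (Fin r) k)) :
    Algebra.TensorProduct.map (piMap k E r g) σA (thetaE k E)
      = ∑ i : Fin r, (X i : MvPolynomial (Fin r) k) ⊗ₜ[k]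
          (Ideal.Quotient.mk _ (X i : MvPolynomial (Fin r) k) : TruncPoly k p r) := by
  simp only [map_piMap_thetaE, hσ, add_sub_cancel_left]

theorem geometric_invariants_stmt15 {p : ℕ} [Fact p.Prime]
    (k : Type) [Field k] [CharP k p]
    (E : Type) [CommGroup E] [Fintype E] (hE : ∀ g : E, g ^ p = 1)
    (r : ℕ) (g : Fin r → E)
    (hbasis : Function.Bijective fun c : Fin r → ZMod p => ∏ i, g i ^ (c i).val)
    -- `σ : kE ≅ k[x₁,…,x_r]/(x_i^p)`, the `k`-algebra isomorphism with `σ(g i) = 1 + x i`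
    (σA : MonoidAlgebra k E →ₐ[k] TruncPoly k p r)
    (hσ : ∀ i : Fin r, σA (MonoidAlgebra.of k E (g i))
      = 1 + Ideal.Quotient.mk _ (X i : MvPolynomial (Fin r) k))
    (hσbij : Function.Bijective σA) :
    Algebra.TensorProduct.map (piMap k E r g) σA (thetaE k E)
      = ∑ i : Fin r, (X i : MvPolynomial (Fin r) k) ⊗ₜ[k]
          (Ideal.Quotient.mk _ (X i : MvPolynomial (Fin r) k) : TruncPoly k p r) :=
  geometric_invariants_stmt15_general k E r g σA hσ
end
end
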